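/- arXiv:2201.12781 — 2 statements merged into one kernel-verified Lean document; each statement's English description precedes it below -/
import Mathlib

section
/- The magnitude of dual complex numbers is multiplicative: |pq| = |p|·|q| for all dual complex numbers p, q. -/
open TrivSqZeroExt

/-- The magnitude of a dual complex number `q = q_st + q_I ε`, a dual number:
`|q| = √(q₁²+q₂²) + ((q₁q₃+q₂q₄)/√(q₁²+q₂²)) ε` if `q_st ≠ 0`, and
`|q| = √(q₃²+q₄²) ε` if `q_st = 0`. -/
noncomputable def dcAbs (q : DualNumber ℂ) : DualNumber ℝ :=
  if q.fst ≠ 0 then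
    (‖q.fst‖,
      (q.fst.re * q.snd.re + q.fst.im * q.snd.im) / ‖q.fst‖)
  else (0, ‖q.snd‖)

/-!
The standard part of `|q|` is `‖q_st‖` in both cases, so it is multiplicative. When `q_st ≠ 0`
the dual part is `Re(conj q_st · q_I) / ‖q_st‖`, and multiplicativity of the dual part reduces to
`Re(conj(ac) (ad + bc)) = ‖a‖² Re(conj c · d) + ‖c‖² Re(conj a · b)`. When a standard part
vanishes, `pq` has dual part `a d` or `b c` (or `0`), whose norm is again a product of norms.
-/

open ComplexConjugate

theorem fst_dcAbs (q : DualNumber ℂ) : (dcAbs q).fst = ‖q.fst‖ := by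
  by_cases hq : q.fst = 0 <;> simp [dcAbs, hq]

theorem snd_dcAbs_of_fst_ne_zero {q : DualNumber ℂ} (hq : q.fst ≠ 0) :
    (dcAbs q).snd = (conj q.fst * q.snd).re / ‖q.fst‖ := by
  simp [dcAbs, hq]

theorem snd_dcAbs_of_fst_eq_zero {q : DualNumber ℂ} (hq : q.fst = 0) :
    (dcAbs q).snd = ‖q.snd‖ := by
  simp [dcAbs, hq]

theorem Complex.re_conj_mul_mul_add (a b c d : ℂ) :
    (conj (a * c) * (a * d + b * c)).re =
      ‖a‖ ^ 2 * (conj c * d).re + ‖c‖ ^ 2 * (conj a * b).re := by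
  have h : conj (a * c) * (a * d + b * c) =
      ‖a‖ ^ 2 * (conj c * d) + ‖c‖ ^ 2 * (conj a * b) := by
    rw [← Complex.ofReal_pow, ← Complex.ofReal_pow, Complex.sq_norm, Complex.sq_norm,
      Complex.normSq_eq_conj_mul_self, Complex.normSq_eq_conj_mul_self, map_mul]
    ring
  rw [h]
  simp [← Complex.ofReal_pow]

/-- The magnitude of dual complex numbers is multiplicative: `|pq| = |p|·|q|`. -/
theorem dcAbs_mul (p q : DualNumber ℂ) : dcAbs (p * q) = dcAbs p * dcAbs q := by
  ext
  · rw [fst_mul, fst_dcAbs, fst_dcAbs, fst_dcAbs, fst_mul, norm_mul]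
  rw [DualNumber.snd_mul, fst_dcAbs, fst_dcAbs]
  have hpq_snd : (p * q).snd = p.fst * q.snd + p.snd * q.fst := DualNumber.snd_mul p q
  rcases eq_or_ne p.fst 0 with hp | hp <;> rcases eq_or_ne q.fst 0 with hq | hq
  · rw [snd_dcAbs_of_fst_eq_zero hp, snd_dcAbs_of_fst_eq_zero hq,
      snd_dcAbs_of_fst_eq_zero (by simp [hp]), hpq_snd]
    simp [hp, hq]
  · rw [snd_dcAbs_of_fst_eq_zero hp, snd_dcAbs_of_fst_eq_zero (by simp [hp]), hpq_snd]
    simp [hp]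
  · rw [snd_dcAbs_of_fst_eq_zero hq, snd_dcAbs_of_fst_eq_zero (by simp [hq]), hpq_snd]
    simp [hq]
  · have hpq : (p * q).fst ≠ 0 := by simpa using mul_ne_zero hp hq
    rw [snd_dcAbs_of_fst_ne_zero hp, snd_dcAbs_of_fst_ne_zero hq, snd_dcAbs_of_fst_ne_zero hpq,
      fst_mul, hpq_snd, Complex.re_conj_mul_mul_add, norm_mul]
    field_simp
end

section
/- If A = A_st + A_I ε is a square dual complex matrix with A_st, A_I complex matrices, then A* A = I implies A A* = I, where A* denotes the conjugate transpose. -/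
open TrivSqZeroExt Matrix

/-- Conjugate of a dual complex number: componentwise complex conjugation. -/
noncomputable def dcConj (q : DualNumber ℂ) : DualNumber ℂ :=
  (starRingEnd ℂ q.fst, starRingEnd ℂ q.snd)

/-- Conjugate transpose of a dual complex matrix. -/
noncomputable def dcCT {m n : ℕ} (A : Matrix (Fin m) (Fin n) (DualNumber ℂ)) :
    Matrix (Fin n) (Fin m) (DualNumber ℂ) :=
  fun i j => dcConj (A j i)

/-- For a square dual complex matrix `A`, `A* A = I` implies `A A* = I`. -/
theorem dc_unitary_comm {n : ℕ} (A : Matrix (Fin n) (Fin n) (DualNumber ℂ))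
    (h : dcCT A * A = 1) : A * dcCT A = 1 := by
  exact mul_eq_one_comm.mp h
end
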